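/- arXiv:2003.01292 — 3 statements merged into one kernel-verified Lean document; each statement's English description precedes it below -/
import Mathlib

section
/- Let m ≤ n and α_1, α_2, …, α_m ∈ Z_h^n. Then the m×n matrix whose rows are α_1,…,α_m has a right inverse if and only if α_1,…,α_m are linearly independent over Z_h (i.e., x_1α_1 + x_2α_2 + … + x_mα_m = 0 with x_i ∈ Z_h implies x_1 = x_2 = … = x_m = 0). -/
/-
Over `ZMod h` every row-independent matrix has a right inverse because `ZMod h` is a self-injective
ring: `x ↦ x A` is an injective map out of the injective module `Zₕᵐ`, so it has a linear left
inverse, whose matrix is a right inverse of `A`. Self-injectivity follows from Baer's criterion,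
since every ideal of `ZMod h` is principal and, for `h ≠ 0`, `ann a ⊆ ann c` forces `a ∣ c`:
with `d = gcd(a, h)`, the element `h / d` kills `a`, hence `c`, so `d ∣ c`, and `d` is a multiple
of `a` by Bézout.
-/

open scoped Matrix BigOperators

namespace Paper

def HasRightInv {R : Type*} [CommRing R] {m n : ℕ} (A : Matrix (Fin m) (Fin n) R) : Prop :=
  ∃ B : Matrix (Fin n) (Fin m) R, A * B = 1

def rowSpace {R : Type*} [CommRing R] {m n : ℕ} (A : Matrix (Fin m) (Fin n) R) :
    Submodule R (Fin n → R) :=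
  Submodule.span R (Set.range fun i => A i)

def IsSubspaceOfDim {R : Type*} [CommRing R] (n m : ℕ) (V : Submodule R (Fin n → R)) : Prop :=
  ∃ A : Matrix (Fin m) (Fin n) R, HasRightInv A ∧ rowSpace A = V

def Unimodular {R : Type*} [CommRing R] {m n : ℕ} (v : Fin m → Fin n → R) : Prop :=
  HasRightInv (Matrix.of v)

noncomputable def sdim {R : Type*} [CommRing R] {n : ℕ} (V : Submodule R (Fin n → R)) : ℕ :=
  sSup {m | ∃ v : Fin m → Fin n → R, (∀ i, v i ∈ V) ∧ Unimodular v}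

def minorsIdeal {R : Type*} [CommRing R] {m n : ℕ} (A : Matrix (Fin m) (Fin n) R) (k : ℕ) :
    Ideal R :=
  Ideal.span {d | ∃ (f : Fin k → Fin m) (g : Fin k → Fin n), d = (A.submatrix f g).det}

noncomputable def mccoyRank {R : Type*} [CommRing R] {m n : ℕ} (A : Matrix (Fin m) (Fin n) R) : ℕ :=
  sSup {k | ∀ x : R, (∀ y ∈ minorsIdeal A k, x * y = 0) → x = 0}

noncomputable def innerRank {R : Type*} [CommRing R] {m n : ℕ} (A : Matrix (Fin m) (Fin n) R) : ℕ :=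
  sInf {r | ∃ (B : Matrix (Fin m) (Fin r) R) (C : Matrix (Fin r) (Fin n) R), A = B * C}

noncomputable def joinDim {R : Type*} [CommRing R] {n : ℕ} (A B : Submodule R (Fin n → R)) : ℕ :=
  sInf {d | ∃ W : Submodule R (Fin n → R), IsSubspaceOfDim n d W ∧ A ≤ W ∧ B ≤ W}

def mapSub {R S : Type*} [CommRing R] [CommRing S] (f : R →+* S) {n : ℕ}
    (V : Submodule R (Fin n → R)) : Submodule S (Fin n → S) :=
  Submodule.span S ((fun v (j : Fin n) => f (v j)) '' (V : Set (Fin n → R)))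

def dualSub {R : Type*} [CommRing R] {n : ℕ} (V : Submodule R (Fin n → R)) :
    Submodule R (Fin n → R) where
  carrier := {y | ∀ x ∈ V, ∑ j, y j * x j = 0}
  add_mem' := by
    intro a b ha hb
    intro x hx
    have h1 : ∑ j, (a + b) j * x j = (∑ j, a j * x j) + ∑ j, b j * x j := by
      rw [← Finset.sum_add_distrib]
      exact Finset.sum_congr rfl fun j _ => by simp [add_mul]
    simp only [Set.mem_setOf_eq] at ha hb
    rw [h1, ha x hx, hb x hx, add_zero]
  zero_mem' := by
    intro x hx
    simp
  smul_mem' := by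
    intro c a ha
    intro x hx
    simp only [Set.mem_setOf_eq] at ha
    have h1 : ∑ j, (c • a) j * x j = c * ∑ j, a j * x j := by
      rw [Finset.mul_sum]
      exact Finset.sum_congr rfl fun j _ => by simp [mul_assoc]
    rw [h1, ha x hx, mul_zero]

def grassmannGraph (R : Type*) [CommRing R] (m n r : ℕ) :
    SimpleGraph {V : Submodule R (Fin n → R) // IsSubspaceOfDim n m V} where
  Adj A B := A ≠ B ∧ ((m : ℤ) - (r : ℤ) < (sdim (A.1 ⊓ B.1) : ℤ))
  symm := by
    refine ⟨?_⟩
    intro A B hAB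
    refine ⟨hAB.1.symm, ?_⟩
    rw [inf_comm]
    exact hAB.2
  loopless := by
    refine ⟨?_⟩
    intro A hA
    exact hA.1 rfl

noncomputable def cliqueNum {V : Type*} (G : SimpleGraph V) : ℕ :=
  sSup {c | ∃ S : Set V, G.IsClique S ∧ S.ncard = c}

noncomputable def indepNum {V : Type*} (G : SimpleGraph V) : ℕ :=
  sSup {c | ∃ S : Set V, (S.Pairwise fun a b => ¬ G.Adj a b) ∧ S.ncard = c}

noncomputable def gaussQ (q a b : ℕ) : ℚ :=
  ∏ j ∈ Finset.range b, ((q : ℚ) ^ (a - j) - 1) / ((q : ℚ) ^ (b - j) - 1)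

end Paper

open Matrix

theorem ZMod.dvd_of_forall_mul_eq_zero_imp {N : ℕ} [NeZero N] {a c : ZMod N}
    (H : ∀ x : ZMod N, x * a = 0 → x * c = 0) : a ∣ c := by
  obtain ⟨A, rfl⟩ := ZMod.intCast_surjective a
  obtain ⟨C, rfl⟩ := ZMod.intCast_surjective c
  set d : ℤ := (Int.gcd A N : ℤ)
  obtain ⟨N', hN'⟩ : d ∣ N := Int.gcd_dvd_right A N
  obtain ⟨A', hA'⟩ : d ∣ A := Int.gcd_dvd_left A N
  have hN'0 : N' ≠ 0 := by
    rintro rfl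
    simp [NeZero.ne N] at hN'
  have hkill : (N' : ZMod N) * A = 0 := by
    rw [← Int.cast_mul, ZMod.intCast_zmod_eq_zero_iff_dvd, hN', hA']
    exact ⟨A', by ring⟩
  obtain ⟨C', hC'⟩ : d ∣ C := by
    have := (ZMod.intCast_zmod_eq_zero_iff_dvd _ N).mp (by exact_mod_cast H _ hkill)
    rw [hN', mul_comm d] at this
    exact (mul_dvd_mul_iff_left hN'0).mp this
  have hbezout : (d : ZMod N) = A * (A.gcdA N : ZMod N) := by
    have := congrArg (Int.cast : ℤ → ZMod N) (Int.gcd_eq_gcd_ab A N)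
    simpa [d] using this
  exact ⟨A.gcdA N * C', by rw [hC']; push_cast; rw [hbezout]; ring⟩

theorem Module.Baer.self_of_isPrincipalIdealRing {R : Type*} [CommRing R] [IsPrincipalIdealRing R]
    (hdvd : ∀ a c : R, (∀ x, x * a = 0 → x * c = 0) → a ∣ c) : Module.Baer R R := by
  intro I g
  obtain ⟨a, rfl⟩ : ∃ a, I = Ideal.span {a} := ⟨_, (Ideal.span_singleton_generator I).symm⟩
  have ha : a ∈ Ideal.span {a} := Ideal.mem_span_singleton_self a
  obtain ⟨e, he⟩ := hdvd a (g ⟨a, ha⟩) fun x hx => by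
    rw [← smul_eq_mul, ← map_smul]
    convert map_zero g
    exact Subtype.ext hx
  refine ⟨LinearMap.toSpanSingleton R R e, fun x hx => ?_⟩
  obtain ⟨r, rfl⟩ := Ideal.mem_span_singleton'.mp hx
  have hsmul : (⟨r * a, hx⟩ : Ideal.span {a}) = r • ⟨a, ha⟩ := rfl
  rw [hsmul, map_smul, he, LinearMap.toSpanSingleton_apply, smul_eq_mul, smul_eq_mul, mul_assoc]

instance ZMod.instIsPrincipalIdealRing (N : ℕ) : IsPrincipalIdealRing (ZMod N) :=
  .of_surjective (Int.castRingHom _) ZMod.intCast_surjective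

instance ZMod.instInjectiveSelf (N : ℕ) [NeZero N] : Module.Injective (ZMod N) (ZMod N) :=
  (Module.Baer.self_of_isPrincipalIdealRing fun _ _ => ZMod.dvd_of_forall_mul_eq_zero_imp).injective

theorem Matrix.exists_mul_eq_one_iff_vecMul_injective {R m n : Type*} [CommRing R]
    [Module.Injective R R] [Fintype m] [Fintype n] [DecidableEq m] [DecidableEq n]
    {A : Matrix m n R} : (∃ B : Matrix n m R, A * B = 1) ↔ Function.Injective A.vecMul := by
  refine ⟨fun ⟨B, hAB⟩ x y hxy => ?_, fun hA => ?_⟩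
  · simpa [hAB] using congrArg (· ᵥ* B) hxy
  · obtain ⟨g, hg⟩ := Module.Injective.extension_property R (m → R) _ _
      A.vecMulLinear hA LinearMap.id
    refine ⟨(LinearMap.toMatrix' g)ᵀ, vecMul_injective (funext fun x => ?_)⟩
    dsimp only
    rw [← vecMul_vecMul, vecMul_transpose, LinearMap.toMatrix'_mulVec]
    simpa using LinearMap.congr_fun hg x

namespace Paper

theorem stmt_3_general (t : ℕ) (p s : Fin t → ℕ)
    (hp : ∀ i, (p i).Prime)
    (h : ℕ) (hh : h = ∏ i, p i ^ s i)
    (m n : ℕ)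
    (α : Fin m → Fin n → ZMod h) :
    HasRightInv (Matrix.of α) ↔
      ∀ x : Fin m → ZMod h, (∑ i, x i • α i) = 0 → ∀ i, x i = 0 := by
  have : NeZero h := ⟨hh ▸ Finset.prod_ne_zero_iff.mpr fun i _ => pow_ne_zero _ (hp i).ne_zero⟩
  rw [HasRightInv, exists_mul_eq_one_iff_vecMul_injective, vecMul_injective_iff,
    Fintype.linearIndependent_iff]
  rfl

theorem stmt_3 (t : ℕ) (ht : 1 ≤ t) (p s : Fin t → ℕ)
    (hp : ∀ i, (p i).Prime) (hs : ∀ i, 1 ≤ s i) (hpinj : Function.Injective p)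
    (h : ℕ) (hh : h = ∏ i, p i ^ s i)
    (m n : ℕ) (hmn : m ≤ n)
    (α : Fin m → Fin n → ZMod h) :
    HasRightInv (Matrix.of α) ↔
      ∀ x : Fin m → ZMod h, (∑ i, x i • α i) = 0 → ∀ i, x i = 0 :=
  stmt_3_general t p s hp h hh m n α

end Paper
end

section
/- Let A and B be subspaces of Z_h^n. Then dim(A∩B) = min{dim(π_i(A) ∩ π_i(B)) : i = 1,…,t}, where A∩B is the intersection of the submodules A and B, and where on the right-hand side dim is the analogously defined dimension of a Z_{p_i^{s_i}}-submodule of Z_{p_i^{s_i}}^n. -/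
open scoped Matrix BigOperators

namespace Paper

/-!
By the Chinese remainder theorem `ZMod h ≃+* Π i, ZMod (p i ^ s i)`, and everything decomposes
along this product. A matrix has a right inverse iff each of its reductions has one, and
families of vectors in the reductions `π_i(V)` of a submodule `V` lift to one family in `V` by
gluing local lifts with the idempotents of the decomposition; hence `dim V = min_i dim π_i(V)`
for every submodule `V`. Finally `π_i(A ∩ B) = π_i(A) ∩ π_i(B)`, because a vector of `Z_h^n`
supported on the `i`-th factor is determined by its `i`-th reduction.
-/

open Function

section Unimodular

variable {R : Type*} [CommRing R] {m n : ℕ}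

theorem Unimodular.card_le [Nontrivial R] {v : Fin m → Fin n → R} (hv : Unimodular v) :
    m ≤ n := by
  obtain ⟨B, hB⟩ := hv
  refine le_of_fin_injective R (Matrix.vecMulLinear (Matrix.of v)) fun x y hxy => ?_
  simpa [Matrix.vecMul_vecMul, hB] using congrArg (Matrix.vecMul · B) hxy

theorem Unimodular.comp_injective {m' : ℕ} {v : Fin m → Fin n → R} (hv : Unimodular v)
    {g : Fin m' → Fin m} (hg : Injective g) : Unimodular (v ∘ g) := by
  obtain ⟨B, hB⟩ := hv
  refine ⟨B.submatrix id g, ?_⟩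
  rw [← Matrix.submatrix_one g hg, ← hB, Matrix.submatrix_mul _ _ _ id _ bijective_id]
  rfl

theorem Unimodular.map {S : Type*} [CommRing S] {v : Fin m → Fin n → R} (hv : Unimodular v)
    (f : R →+* S) : Unimodular fun k j => f (v k j) := by
  obtain ⟨B, hB⟩ := hv
  refine ⟨B.map f, ?_⟩
  change (Matrix.of v).map f * B.map f = 1
  rw [← Matrix.map_mul, hB, Matrix.map_one f f.map_zero f.map_one]

end Unimodular

section Sdim

variable {R : Type*} [CommRing R] [Nontrivial R] {m n : ℕ} {V : Submodule R (Fin n → R)}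

theorem le_sdim {v : Fin m → Fin n → R} (hvV : ∀ k, v k ∈ V) (hv : Unimodular v) :
    m ≤ sdim V :=
  le_csSup ⟨n, fun _ ⟨_, _, hw⟩ => hw.card_le⟩ ⟨v, hvV, hv⟩

theorem exists_unimodular_of_le_sdim (hm : m ≤ sdim V) :
    ∃ v : Fin m → Fin n → R, (∀ k, v k ∈ V) ∧ Unimodular v := by
  obtain ⟨v, hvV, hv⟩ : sdim V ∈ {m | ∃ v : Fin m → Fin n → R, (∀ k, v k ∈ V) ∧ Unimodular v} :=
    Nat.sSup_mem ⟨0, Fin.elim0, Fin.rec0, 0, Subsingleton.elim _ _⟩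
      ⟨n, fun _ ⟨_, _, hw⟩ => hw.card_le⟩
  exact ⟨v ∘ Fin.castLE hm, fun k => hvV _, hv.comp_injective (Fin.castLE_injective hm)⟩

end Sdim

theorem mem_mapSub_iff {R S : Type*} [CommRing R] [CommRing S] {f : R →+* S}
    (hf : Surjective f) {n : ℕ} {V : Submodule R (Fin n → R)} {x : Fin n → S} :
    x ∈ mapSub f V ↔ ∃ w ∈ V, (fun j => f (w j)) = x := by
  refine ⟨fun hx => ?_, fun ⟨w, hw, hwx⟩ => Submodule.subset_span ⟨w, hw, hwx⟩⟩
  induction hx using Submodule.span_induction with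
  | mem x hx => exact hx
  | zero => exact ⟨0, V.zero_mem, by ext; simp⟩
  | add x y _ _ hx hy =>
    obtain ⟨a, ha, rfl⟩ := hx
    obtain ⟨b, hb, rfl⟩ := hy
    exact ⟨a + b, V.add_mem ha hb, by ext; simp⟩
  | smul c x _ hx =>
    obtain ⟨a, ha, rfl⟩ := hx
    obtain ⟨c, rfl⟩ := hf c
    exact ⟨c • a, V.smul_mem c ha, by ext; simp⟩

section ChineseRemainder

variable {R : Type*} [CommRing R] {n : ℕ} {ι : Type*} {S : ι → Type*}
  [∀ i, CommRing (S i)] {f : ∀ i, R →+* S i}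

theorem unimodular_of_forall_map (hf : Bijective (RingHom.pi f)) {m : ℕ} {v : Fin m → Fin n → R}
    (hv : ∀ i, Unimodular fun k j => f i (v k j)) : Unimodular v := by
  choose B hB using hv
  let e := RingEquiv.ofBijective _ hf
  refine ⟨Matrix.of fun a b => e.symm fun i => B i a b, ?_⟩
  ext a b
  refine e.injective (funext fun i => ?_)
  have hab := congrFun (congrFun (hB i) a) b
  rw [Matrix.mul_apply] at hab
  simp only [Matrix.mul_apply, Matrix.of_apply, map_sum, Finset.sum_apply, map_mul, Pi.mul_apply,
    e.apply_symm_apply]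
  convert hab using 1
  · rfl
  · rw [Matrix.one_apply, Matrix.one_apply]
    split_ifs <;> simp [e]

variable [Fintype ι] [DecidableEq ι]

theorem exists_mem_forall_map_eq (hf : Bijective (RingHom.pi f)) {V : Submodule R (Fin n → R)}
    {x : ∀ i, Fin n → S i} (hx : ∀ i, x i ∈ mapSub (f i) V) :
    ∃ w ∈ V, ∀ i, (fun j => f i (w j)) = x i := by
  choose a haV hax using fun i =>
    (mem_mapSub_iff ((surjective_eval i).comp hf.surjective)).mp (hx i)
  -- glue the lifts `a i` with the idempotents `e i` lifting `Pi.single i 1`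
  choose e he using fun i => hf.surjective (Pi.single i 1)
  refine ⟨∑ i, e i • a i, V.sum_mem fun i _ => V.smul_mem _ (haV i), fun i => ?_⟩
  funext j
  have hei : ∀ k, f i (e k) = if i = k then 1 else 0 := fun k => by
    change RingHom.pi f (e k) i = _
    rw [he k]
    split_ifs with hik
    · subst hik; exact Pi.single_eq_same i 1
    · exact Pi.single_eq_of_ne hik 1
  simp [map_sum, hei, ← hax i]

theorem mapSub_inf (hf : Bijective (RingHom.pi f)) (i : ι) (V W : Submodule R (Fin n → R)) :
    mapSub (f i) (V ⊓ W) = mapSub (f i) V ⊓ mapSub (f i) W := by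
  refine le_antisymm (le_inf (Submodule.span_mono (Set.image_mono inf_le_left))
    (Submodule.span_mono (Set.image_mono inf_le_right))) ?_
  rintro x ⟨hxV, hxW⟩
  -- lifts of `Pi.single i x` are unique, so its lifts in `V` and in `W` coincide
  have hsingle : ∀ U : Submodule R (Fin n → R), x ∈ mapSub (f i) U →
      ∃ w ∈ U, ∀ k, (fun j => f k (w j)) = Pi.single (M := fun k => Fin n → S k) i x k :=
    fun U hxU => exists_mem_forall_map_eq hf fun k => by
      by_cases hk : k = i
      · subst hk; simpa using hxU
      · simp [hk]
  obtain ⟨v, hvV, hv⟩ := hsingle V hxV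
  obtain ⟨w, hwW, hw⟩ := hsingle W hxW
  have hvw : v = w := funext fun j =>
    hf.injective (funext fun k => congrFun ((hv k).trans (hw k).symm) j)
  refine (mem_mapSub_iff ((surjective_eval i).comp hf.surjective)).mpr ⟨v, ⟨hvV, hvw ▸ hwW⟩, ?_⟩
  simpa using hv i

theorem sdim_eq_iInf_sdim_mapSub [Nonempty ι] [∀ i, Nontrivial (S i)]
    (hf : Bijective (RingHom.pi f)) (V : Submodule R (Fin n → R)) :
    sdim V = ⨅ i, sdim (mapSub (f i) V) := by
  have : Nontrivial R := (f (Classical.arbitrary ι)).domain_nontrivial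
  refine le_antisymm (le_ciInf fun i => ?_) ?_
  · obtain ⟨v, hvV, hv⟩ := exists_unimodular_of_le_sdim le_rfl (V := V)
    exact le_sdim (fun k => Submodule.subset_span ⟨v k, hvV k, rfl⟩) (hv.map (f i))
  · choose u huV hu using fun i =>
      exists_unimodular_of_le_sdim (m := ⨅ i, sdim (mapSub (f i) V))
        (ciInf_le (OrderBot.bddBelow _) i)
    choose w hwV hwu using fun k => exists_mem_forall_map_eq hf fun i => huV i k
    refine le_sdim hwV (unimodular_of_forall_map hf fun i => ?_)
    convert hu i using 1
    exact funext fun k => hwu k i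

end ChineseRemainder

theorem ZMod.bijective_pi_castHom {ι : Type*} [Fintype ι] {q : ι → ℕ}
    (hq : Pairwise (Nat.Coprime on q)) {h : ℕ} (hh : h = ∏ i, q i) (hdvd : ∀ i, q i ∣ h) :
    Bijective (RingHom.pi fun i => ZMod.castHom (hdvd i) (ZMod (q i))) := by
  subst hh
  convert (ZMod.prodEquivPi q hq).bijective
  exact congrArg DFunLike.coe (RingHom.ext_zmod _ (ZMod.prodEquivPi q hq).toRingHom)

theorem stmt_7 (t : ℕ) (ht : 1 ≤ t) (p s : Fin t → ℕ)
    (hp : ∀ i, (p i).Prime) (hs : ∀ i, 1 ≤ s i) (hpinj : Function.Injective p)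
    (h : ℕ) (hh : h = ∏ i, p i ^ s i)
    (n : ℕ)
    (A B : Submodule (ZMod h) (Fin n → ZMod h)) :
    sdim (A ⊓ B) = ⨅ i : Fin t,
      sdim ((mapSub (ZMod.castHom (show p i ^ s i ∣ h by rw [hh]; exact Finset.dvd_prod_of_mem _ (Finset.mem_univ i)) (ZMod (p i ^ s i))) A) ⊓
            (mapSub (ZMod.castHom (show p i ^ s i ∣ h by rw [hh]; exact Finset.dvd_prod_of_mem _ (Finset.mem_univ i)) (ZMod (p i ^ s i))) B)) := by
  have : Nonempty (Fin t) := ⟨⟨0, ht⟩⟩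
  have : ∀ i, Fact (1 < p i ^ s i) := fun i =>
    ⟨Nat.one_lt_pow (Nat.one_le_iff_ne_zero.mp (hs i)) (hp i).one_lt⟩
  have hcoprime : Pairwise (Nat.Coprime on fun i => p i ^ s i) := fun i j hij =>
    Nat.Coprime.pow _ _ ((Nat.coprime_primes (hp i) (hp j)).mpr (hpinj.ne hij))
  have hf := ZMod.bijective_pi_castHom hcoprime hh
    fun i => hh ▸ Finset.dvd_prod_of_mem _ (Finset.mem_univ i)
  rw [sdim_eq_iInf_sdim_mapSub hf]
  simp_rw [mapSub_inf hf]

end Paper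
end

section
/- For 1 ≤ k < n, the number of k-subspaces of Z_h^n equals ∏_{i=1}^t p_i^{(s_i−1)k(n−k)} · [n choose k]_{p_i}, where [n choose k]_q = ∏_{j=0}^{k−1} (q^{n−j} − 1)/(q^{k−j} − 1) is the Gaussian binomial coefficient. -/
open scoped Matrix BigOperators

namespace Paper

/-!
A `k`-subspace is the row space of a right-invertible `k × n` matrix, and two right-invertible
matrices have the same row space exactly when they differ by a right-invertible `k × k` factor
on the left. So the number of `k`-subspaces is the number of right-invertible `k × n` matrices
divided by the number of right-invertible `k × k` ones. Both counts are multiplicative under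
`ZMod h ≃+* ∏ ZMod (p_i ^ s_i)`. Over `ZMod (p ^ s)` right-invertibility can be tested modulo
`p`, because reduction is a surjective local homomorphism; over `ZMod p` it means linearly
independent rows. Hence there are `p ^ ((s - 1) k n) ∏_{j < k} (p ^ n - p ^ j)` such matrices,
and the quotient for `(k, n)` and `(k, k)` is `p ^ ((s - 1) k (n - k))` times the Gaussian
binomial coefficient.
-/

open Matrix

abbrev RightInvMatrix (R : Type*) [CommRing R] (k n : ℕ) :=
  {A : Matrix (Fin k) (Fin n) R // HasRightInv A}

section RowSpace

variable {R : Type*} [CommRing R] {k l n : ℕ}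

lemma HasRightInv.mul {C : Matrix (Fin l) (Fin k) R} {A : Matrix (Fin k) (Fin n) R}
    (hC : HasRightInv C) (hA : HasRightInv A) : HasRightInv (C * A) := by
  obtain ⟨D, hD⟩ := hC
  obtain ⟨B, hB⟩ := hA
  exact ⟨B * D, by rw [Matrix.mul_assoc, ← Matrix.mul_assoc A, hB, Matrix.one_mul, hD]⟩

lemma rowSpace_eq_range_vecMulLinear (A : Matrix (Fin k) (Fin n) R) :
    rowSpace A = LinearMap.range A.vecMulLinear :=
  (range_vecMulLinear A).symm

lemma exists_eq_mul_of_rowSpace_le {A : Matrix (Fin l) (Fin n) R}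
    {A' : Matrix (Fin k) (Fin n) R} (h : rowSpace A ≤ rowSpace A') :
    ∃ C : Matrix (Fin l) (Fin k) R, A = C * A' := by
  have hrow (i : Fin l) : ∃ c, c ᵥ* A' = A i := by
    simpa [rowSpace_eq_range_vecMulLinear] using h (Submodule.subset_span ⟨i, rfl⟩)
  choose c hc using hrow
  exact ⟨Matrix.of c, by ext i j; simp [← hc i, Matrix.vecMul, Matrix.mul_apply, dotProduct]⟩

lemma rowSpace_mul_le (C : Matrix (Fin l) (Fin k) R) (A : Matrix (Fin k) (Fin n) R) :
    rowSpace (C * A) ≤ rowSpace A := by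
  rw [rowSpace_eq_range_vecMulLinear, rowSpace_eq_range_vecMulLinear]
  rintro _ ⟨x, rfl⟩
  exact ⟨x ᵥ* C, vecMul_vecMul x C A⟩

lemma rowSpace_mul_of_hasRightInv {C : Matrix (Fin k) (Fin k) R} (hC : HasRightInv C)
    (A : Matrix (Fin k) (Fin n) R) : rowSpace (C * A) = rowSpace A := by
  obtain ⟨E, hE⟩ := hC
  refine le_antisymm (rowSpace_mul_le C A) ?_
  calc rowSpace A = rowSpace (E * (C * A)) := by
        rw [← Matrix.mul_assoc, mul_eq_one_comm.1 hE, Matrix.one_mul]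
    _ ≤ rowSpace (C * A) := rowSpace_mul_le E (C * A)

end RowSpace

section Orbits

variable {R : Type*} [CommRing R] {k n : ℕ}

lemma mul_mul_eq_self_of_rowSpace_le {A A₀ : Matrix (Fin k) (Fin n) R}
    {B₀ : Matrix (Fin n) (Fin k) R} (hB₀ : A₀ * B₀ = 1) (h : rowSpace A ≤ rowSpace A₀) :
    A * B₀ * A₀ = A := by
  obtain ⟨C, rfl⟩ := exists_eq_mul_of_rowSpace_le h
  rw [Matrix.mul_assoc C, hB₀, Matrix.mul_one]

def rightInvMatrixFiberEquiv {A₀ : Matrix (Fin k) (Fin n) R} {B₀ : Matrix (Fin n) (Fin k) R}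
    (hB₀ : A₀ * B₀ = 1) :
    {A : RightInvMatrix R k n // rowSpace A.1 = rowSpace A₀} ≃ RightInvMatrix R k k where
  toFun A := ⟨A.1.1 * B₀, by
    obtain ⟨B, hB⟩ := A.1.2
    refine ⟨A₀ * B, ?_⟩
    rw [← Matrix.mul_assoc, mul_mul_eq_self_of_rowSpace_le hB₀ A.2.le, hB]⟩
  invFun C :=
    ⟨⟨C.1 * A₀, C.2.mul ⟨B₀, hB₀⟩⟩, rowSpace_mul_of_hasRightInv C.2 A₀⟩
  left_inv A := by
    ext : 2
    exact mul_mul_eq_self_of_rowSpace_le hB₀ A.2.le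
  right_inv C := by
    ext : 1
    simp only [Matrix.mul_assoc, hB₀, Matrix.mul_one]

noncomputable def rightInvMatrixEquivProd (k n : ℕ) :
    RightInvMatrix R k n ≃
      {V : Submodule R (Fin n → R) // IsSubspaceOfDim n k V} × RightInvMatrix R k k :=
  let rowSpaceOf (A : RightInvMatrix R k n) :
      {V : Submodule R (Fin n → R) // IsSubspaceOfDim n k V} := ⟨rowSpace A.1, A.1, A.2, rfl⟩
  (Equiv.sigmaFiberEquiv rowSpaceOf).symm.trans <|
    (Equiv.sigmaCongrRight fun V =>
      let hV := V.2.choose_spec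
      (Equiv.subtypeEquivRight fun A => by
        rw [hV.2, Subtype.ext_iff]).trans
        (rightInvMatrixFiberEquiv hV.1.choose_spec)).trans
    (Equiv.sigmaEquivProd _ _)

lemma card_rightInvMatrix_eq_card_subspace_mul (k n : ℕ) :
    Nat.card (RightInvMatrix R k n) =
      Nat.card {V : Submodule R (Fin n → R) // IsSubspaceOfDim n k V} *
        Nat.card (RightInvMatrix R k k) := by
  rw [← Nat.card_prod]
  exact Nat.card_congr (rightInvMatrixEquivProd k n)

instance (k : ℕ) : Nonempty (RightInvMatrix R k k) :=
  ⟨⟨1, 1, Matrix.one_mul 1⟩⟩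

end Orbits

section BaseChange

variable {R S : Type*} [CommRing R] [CommRing S] {k n : ℕ}

lemma HasRightInv.map {A : Matrix (Fin k) (Fin n) R} (h : HasRightInv A) (f : R →+* S) :
    HasRightInv (A.map f) := by
  obtain ⟨B, hB⟩ := h
  exact ⟨B.map f, by rw [← Matrix.map_mul, hB, Matrix.map_one f (map_zero f) (map_one f)]⟩

/-- If `B` lifts a right inverse of `A.map f`, then `(A * B).det` maps to `1`, so it is a unit
because `f` is local, and `B * (A * B)⁻¹` is a right inverse of `A`. -/
lemma hasRightInv_map_iff {f : R →+* S} [IsLocalHom f] (hf : Function.Surjective f)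
    (A : Matrix (Fin k) (Fin n) R) : HasRightInv (A.map f) ↔ HasRightInv A := by
  refine ⟨fun ⟨B', hB'⟩ => ?_, fun h => h.map f⟩
  obtain ⟨B, rfl⟩ : ∃ B : Matrix (Fin n) (Fin k) R, B.map f = B' :=
    ⟨Matrix.of fun a b => (hf (B' a b)).choose, by ext a b; exact (hf _).choose_spec⟩
  have hdet : IsUnit (A * B).det := by
    refine IsUnit.of_map f _ ?_
    rw [RingHom.map_det, RingHom.mapMatrix_apply, Matrix.map_mul, hB', det_one]
    exact isUnit_one
  exact ⟨B * (A * B)⁻¹, by rw [← Matrix.mul_assoc, mul_nonsing_inv _ hdet]⟩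

lemma card_rightInvMatrix_congr (e : R ≃+* S) (k n : ℕ) :
    Nat.card (RightInvMatrix R k n) = Nat.card (RightInvMatrix S k n) :=
  Nat.card_congr <| e.toEquiv.mapMatrix.subtypeEquiv fun A =>
    (hasRightInv_map_iff (f := (e : R →+* S)) e.surjective A).symm

end BaseChange

section Pi

variable {ι : Type*} (R : ι → Type*) [∀ i, CommRing (R i)] {k n : ℕ}

lemma hasRightInv_iff_forall_map_evalRingHom (A : Matrix (Fin k) (Fin n) (∀ i, R i)) :
    HasRightInv A ↔ ∀ i, HasRightInv (A.map (Pi.evalRingHom R i)) := by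
  refine ⟨fun h i => h.map _, fun h => ?_⟩
  choose B hB using h
  refine ⟨Matrix.of fun a b i => B i a b, ?_⟩
  ext a b i
  simpa [Matrix.mul_apply, Matrix.one_apply, apply_ite (fun x : ∀ i, R i => x i)] using
    congrFun (congrFun (hB i) a) b

lemma card_rightInvMatrix_pi [Fintype ι] (k n : ℕ) :
    Nat.card (RightInvMatrix (∀ i, R i) k n) = ∏ i, Nat.card (RightInvMatrix (R i) k n) := by
  classical
  rw [← Nat.card_pi]
  refine Nat.card_congr <|
    (Equiv.subtypeEquivRight (hasRightInv_iff_forall_map_evalRingHom R)).trans <|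
    (Equiv.subtypeEquiv (p := fun A => ∀ i, HasRightInv (A.map (Pi.evalRingHom R i)))
      (q := fun M => ∀ i, HasRightInv (M i))
      ⟨fun A i => A.map (Pi.evalRingHom R i), fun M => Matrix.of fun a b i => M i a b,
        fun _ => rfl, fun _ => rfl⟩ fun _ => Iff.rfl).trans
    (Equiv.subtypePiEquivPi (p := fun i => @HasRightInv (R i) _ k n))

end Pi

lemma _root_.AddMonoidHom.card_preimage_mul_card {M N : Type*} [AddGroup M] [AddGroup N]
    (f : M →+ N) (hf : Function.Surjective f) (T : Set N) :
    Nat.card (f ⁻¹' T) * Nat.card N = Nat.card T * Nat.card M := by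
  let e := QuotientAddGroup.quotientKerEquivOfSurjective f hf
  have hpre : f ⁻¹' T = QuotientAddGroup.mk ⁻¹' (e ⁻¹' T) := rfl
  have hT : Nat.card (e ⁻¹' T) = Nat.card T :=
    Nat.card_congr (e.toEquiv.subtypeEquiv fun _ => Iff.rfl)
  have hN : Nat.card (M ⧸ f.ker) = Nat.card N := Nat.card_congr e.toEquiv
  rw [hpre, Nat.card_congr (QuotientAddGroup.preimageMkEquivAddSubgroupProdSet _ _),
    Nat.card_prod, hT, AddSubgroup.card_eq_card_quotient_mul_card_addSubgroup f.ker, hN]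
  ring

lemma hasRightInv_iff_linearIndependent_row {K : Type*} [Field K] {k n : ℕ}
    (A : Matrix (Fin k) (Fin n) K) : HasRightInv A ↔ LinearIndependent K A.row := by
  rw [HasRightInv, ← mulVec_surjective_iff_exists_right_inverse,
    linearIndependent_iff_card_eq_finrank_span, Set.finrank, ← rank_eq_finrank_span_row,
    Fintype.card_fin, Matrix.rank, ← Matrix.coe_mulVecLin, ← LinearMap.range_eq_top,
    Submodule.eq_top_iff_finrank_eq, Module.finrank_fin_fun, eq_comm]

lemma card_rightInvMatrix_of_field (K : Type*) [Field K] [Fintype K] {k n : ℕ} (hkn : k ≤ n) :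
    Nat.card (RightInvMatrix K k n) =
      ∏ j : Fin k, (Fintype.card K ^ n - Fintype.card K ^ (j : ℕ)) := by
  have := card_linearIndependent (K := K) (V := Fin n → K) (k := k) (by simpa using hkn)
  rw [Module.finrank_fin_fun] at this
  rw [← this]
  exact Nat.card_congr (Equiv.subtypeEquivRight hasRightInv_iff_linearIndependent_row)

lemma _root_.ZMod.isLocalHom_castHom_pow {p s : ℕ} (hp : p.Prime) (hs : 0 < s) :
    IsLocalHom (ZMod.castHom (dvd_pow_self p hs.ne') (ZMod p)) := by
  have : NeZero (p ^ s) := ⟨pow_ne_zero s hp.ne_zero⟩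
  refine ⟨fun x hx => ?_⟩
  rw [← ZMod.natCast_zmod_val x, map_natCast] at hx
  rw [← ZMod.natCast_zmod_val x, ZMod.isUnit_natCast_iff_not_dvd_pow hp hs]
  exact hp.coprime_iff_not_dvd.1 ((ZMod.isUnit_iff_coprime _ _).1 hx).symm

lemma card_matrix_zmod (k n q : ℕ) [NeZero q] :
    Nat.card (Matrix (Fin k) (Fin n) (ZMod q)) = q ^ (k * n) := by
  simp [Matrix, ← pow_mul, mul_comm]

lemma card_rightInvMatrix_zmod_prime_pow {p s : ℕ} (hp : p.Prime) (hs : 0 < s) {k n : ℕ}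
    (hkn : k ≤ n) :
    Nat.card (RightInvMatrix (ZMod (p ^ s)) k n) =
      p ^ ((s - 1) * (k * n)) * ∏ j : Fin k, (p ^ n - p ^ (j : ℕ)) := by
  have : Fact p.Prime := ⟨hp⟩
  have : NeZero (p ^ s) := ⟨pow_ne_zero s hp.ne_zero⟩
  let π := ZMod.castHom (dvd_pow_self p hs.ne') (ZMod p)
  have := ZMod.isLocalHom_castHom_pow hp hs
  have hπ : Function.Surjective π := ZMod.castHom_surjective _
  let F := (π : ZMod (p ^ s) →+ ZMod p).mapMatrix (m := Fin k) (n := Fin n)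
  have hF : Function.Surjective F := fun Y =>
    ⟨Matrix.of fun a b => (hπ (Y a b)).choose, by ext a b; exact (hπ _).choose_spec⟩
  have hpre :
      Nat.card (F ⁻¹' {Y | HasRightInv Y}) = Nat.card (RightInvMatrix (ZMod (p ^ s)) k n) :=
    Nat.card_congr (Equiv.subtypeEquivRight fun A => hasRightInv_map_iff hπ A)
  have hfiber := F.card_preimage_mul_card hF {Y | HasRightInv Y}
  rw [hpre, show Nat.card {Y | HasRightInv Y} = Nat.card (RightInvMatrix (ZMod p) k n) from rfl,
    card_rightInvMatrix_of_field _ hkn, ZMod.card, card_matrix_zmod, card_matrix_zmod] at hfiber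
  apply Nat.eq_of_mul_eq_mul_right (pow_pos hp.pos (k * n))
  have hexp : (s - 1) * (k * n) + k * n = s * (k * n) := by
    rw [← Nat.succ_mul, Nat.succ_eq_add_one, Nat.sub_add_cancel hs]
  rw [hfiber, mul_comm _ (∏ j : Fin k, _), mul_assoc, ← pow_add, hexp, pow_mul p s]

lemma prod_pow_sub_pow_eq_gaussQ_mul {q : ℕ} (hq : 1 < q) {k n : ℕ} (hkn : k ≤ n) :
    ∏ j : Fin k, ((q : ℚ) ^ n - (q : ℚ) ^ (j : ℕ)) =
      gaussQ q n k * ∏ j : Fin k, ((q : ℚ) ^ k - (q : ℚ) ^ (j : ℕ)) := by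
  rw [gaussQ, Fin.prod_univ_eq_prod_range (fun j => (q : ℚ) ^ n - (q : ℚ) ^ j),
    Fin.prod_univ_eq_prod_range (fun j => (q : ℚ) ^ k - (q : ℚ) ^ j),
    ← Finset.prod_mul_distrib]
  refine Finset.prod_congr rfl fun j hj => ?_
  have hjk : j < k := Finset.mem_range.1 hj
  have hpow_sub (m : ℕ) (hjm : j ≤ m) :
      (q : ℚ) ^ m - (q : ℚ) ^ j = (q : ℚ) ^ j * ((q : ℚ) ^ (m - j) - 1) := by
    rw [mul_sub, mul_one, ← pow_add, Nat.add_sub_cancel' hjm]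
  have hne : (q : ℚ) ^ (k - j) - 1 ≠ 0 :=
    sub_ne_zero.2 (one_lt_pow₀ (by exact_mod_cast hq) (by omega)).ne'
  rw [hpow_sub n (by omega), hpow_sub k hjk.le]
  field_simp

lemma cast_prod_pow_sub_pow {q : ℕ} (hq : 0 < q) {k n : ℕ} (hkn : k ≤ n) :
    ((∏ j : Fin k, (q ^ n - q ^ (j : ℕ)) : ℕ) : ℚ) =
      ∏ j : Fin k, ((q : ℚ) ^ n - (q : ℚ) ^ (j : ℕ)) := by
  rw [Nat.cast_prod]
  refine Finset.prod_congr rfl fun j _ => ?_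
  push_cast [Nat.cast_sub (Nat.pow_le_pow_right hq (j.2.le.trans hkn))]
  rfl

lemma card_rightInvMatrix_zmod_prime_pow_eq_mul {p s : ℕ} (hp : p.Prime) (hs : 0 < s) {k n : ℕ}
    (hkn : k ≤ n) :
    (Nat.card (RightInvMatrix (ZMod (p ^ s)) k n) : ℚ) =
      (p : ℚ) ^ ((s - 1) * k * (n - k)) * gaussQ p n k *
        Nat.card (RightInvMatrix (ZMod (p ^ s)) k k) := by
  have hexp : (s - 1) * (k * n) = (s - 1) * k * (n - k) + (s - 1) * (k * k) := by
    rw [mul_assoc, ← Nat.mul_add, ← Nat.mul_add, Nat.sub_add_cancel hkn]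
  rw [card_rightInvMatrix_zmod_prime_pow hp hs hkn,
    card_rightInvMatrix_zmod_prime_pow hp hs le_rfl, Nat.cast_mul, Nat.cast_mul,
    cast_prod_pow_sub_pow hp.pos hkn, cast_prod_pow_sub_pow hp.pos le_rfl,
    prod_pow_sub_pow_eq_gaussQ_mul hp.one_lt hkn, hexp, pow_add]
  push_cast
  ring

theorem stmt_8_general (t : ℕ) (p s : Fin t → ℕ)
    (hp : ∀ i, (p i).Prime) (hs : ∀ i, 1 ≤ s i) (hpinj : Function.Injective p)
    (h : ℕ) (hh : h = ∏ i, p i ^ s i)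
    (n k : ℕ) (hkn : k < n) :
    (({V : Submodule (ZMod h) (Fin n → ZMod h) | IsSubspaceOfDim n k V}.ncard : ℚ)) =
      ∏ i, (p i : ℚ) ^ ((s i - 1) * k * (n - k)) * gaussQ (p i) n k := by
  subst hh
  have : NeZero (∏ i, p i ^ s i) :=
    ⟨Finset.prod_ne_zero_iff.2 fun i _ => pow_ne_zero _ (hp i).ne_zero⟩
  have hcoprime : Pairwise (Function.onFun Nat.Coprime fun i => p i ^ s i) := fun i j hij =>
    Nat.Coprime.pow _ _ ((Nat.coprime_primes (hp i) (hp j)).2 (hpinj.ne hij))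
  have hcrt (a b : ℕ) : Nat.card (RightInvMatrix (ZMod (∏ i, p i ^ s i)) a b) =
      ∏ i, Nat.card (RightInvMatrix (ZMod (p i ^ s i)) a b) := by
    rw [card_rightInvMatrix_congr (ZMod.prodEquivPi _ hcoprime), card_rightInvMatrix_pi]
  have hGL : (Nat.card (RightInvMatrix (ZMod (∏ i, p i ^ s i)) k k) : ℚ) ≠ 0 :=
    Nat.cast_ne_zero.2 Nat.card_pos.ne'
  apply mul_right_cancel₀ hGL
  rw [← Nat.card_coe_set_eq, Set.coe_ofPred, ← Nat.cast_mul,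
    ← card_rightInvMatrix_eq_card_subspace_mul, hcrt, hcrt]
  push_cast
  rw [← Finset.prod_mul_distrib]
  exact Finset.prod_congr rfl fun i _ =>
    card_rightInvMatrix_zmod_prime_pow_eq_mul (hp i) (hs i) hkn.le

theorem stmt_8 (t : ℕ) (ht : 1 ≤ t) (p s : Fin t → ℕ)
    (hp : ∀ i, (p i).Prime) (hs : ∀ i, 1 ≤ s i) (hpinj : Function.Injective p)
    (h : ℕ) (hh : h = ∏ i, p i ^ s i)
    (n k : ℕ) (hk : 1 ≤ k) (hkn : k < n) :
    (({V : Submodule (ZMod h) (Fin n → ZMod h) | IsSubspaceOfDim n k V}.ncard : ℚ)) =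
      ∏ i, (p i : ℚ) ^ ((s i - 1) * k * (n - k)) * gaussQ (p i) n k :=
  stmt_8_general t p s hp hs hpinj h hh n k hkn

end Paper
end
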